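/- The empirical Bayes estimate σ̂_n² = n⁻¹(y − Bζ)ᵀ(BΛBᵀ + I)⁻¹(y − Bζ) can be rewritten as σ̂_n² = (1/n)Σ_{i=1}^n (y_i − f̄(x_i))² + (1/n)Σ_{j=1}^J n_j(ȳ_j − ζ_j)²/(1 + n_jλ_j²), where f̄(x) = Σ_j ȳ_j 1_{I_j}(x). -/

import Mathlib

open Matrix Finset
open scoped BigOperators

/-!
The columns of the indicator matrix `B` are orthogonal, `BᵀB = diag(n_j)`, so the Woodbury
identity collapses to `(BΛBᵀ + 1)⁻¹ = 1 - B D Bᵀ` with `D = diag(λ_j² / (1 + n_j λ_j²))`.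
The quadratic form is then `|z|² - Σ_j D_j (Bᵀz)_j²` with `(Bᵀz)_j = n_j (ȳ_j - ζ_j)`, and the
within/between decomposition `|z|² = Σ_i (y_i - ȳ_{c i})² + Σ_j n_j (ȳ_j - ζ_j)²` leaves
`n_j (ȳ_j - ζ_j)² (1 - n_j D_j) = n_j (ȳ_j - ζ_j)² / (1 + n_j λ_j²)` for group `j`.
-/

variable {ι κ R K : Type*}

namespace Matrix

def partitionIndicator (R : Type*) [Zero R] [One R] [DecidableEq κ] (c : ι → κ) :
    Matrix ι κ R :=
  of fun i j => if c i = j then 1 else 0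

section PartitionIndicator

variable [DecidableEq κ] [Semiring R] (c : ι → κ)

lemma partitionIndicator_mulVec [Fintype κ] (v : κ → R) :
    partitionIndicator R c *ᵥ v = fun i => v (c i) := by
  ext i
  simp [partitionIndicator, mulVec, dotProduct]

variable [Fintype ι]

lemma transpose_partitionIndicator_mulVec (z : ι → R) (j : κ) :
    ((partitionIndicator R c)ᵀ *ᵥ z) j = ∑ i with c i = j, z i := by
  simp [partitionIndicator, mulVec, dotProduct, sum_filter]

lemma transpose_partitionIndicator_mul_self :
    (partitionIndicator R c)ᵀ * partitionIndicator R c =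
      diagonal fun j => (#{i | c i = j} : R) := by
  ext j k
  have hprod : ∀ i, ((if c i = j then 1 else 0) * (if c i = k then 1 else 0) : R) =
      if j = k then (if c i = j then 1 else 0) else 0 := by
    intro i
    split_ifs <;> simp_all
  rw [mul_apply]
  simp only [partitionIndicator, transpose_apply, of_apply, hprod, diagonal_apply]
  split_ifs <;> simp [sum_boole]

end PartitionIndicator

section Woodbury

variable [Fintype ι] [DecidableEq ι] [Fintype κ]

lemma inv_mul_mul_transpose_add_one [CommRing R] {B : Matrix ι κ R} {Λ D : Matrix κ κ R}
    (h : Λ * (Bᵀ * B) * D + D = Λ) :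
    (B * Λ * Bᵀ + 1)⁻¹ = 1 - B * D * Bᵀ := by
  refine inv_eq_right_inv ?_
  calc (B * Λ * Bᵀ + 1) * (1 - B * D * Bᵀ)
      = 1 + B * Λ * Bᵀ - B * (Λ * (Bᵀ * B) * D + D) * Bᵀ := by
        simp only [Matrix.mul_sub, Matrix.add_mul, Matrix.mul_add, Matrix.mul_one,
          Matrix.one_mul, Matrix.mul_assoc]
        abel
    _ = 1 := by rw [h]; abel

lemma dotProduct_one_sub_mul_mul_transpose_mulVec [CommRing R] (z : ι → R)
    (B : Matrix ι κ R) (D : Matrix κ κ R) :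
    z ⬝ᵥ ((1 - B * D * Bᵀ) *ᵥ z) = z ⬝ᵥ z - (Bᵀ *ᵥ z) ⬝ᵥ (D *ᵥ (Bᵀ *ᵥ z)) := by
  rw [sub_mulVec, one_mulVec, dotProduct_sub, ← mulVec_mulVec, ← mulVec_mulVec,
    dotProduct_mulVec, mulVec_transpose]

lemma inv_partitionIndicator_mul_diagonal_mul_transpose_add_one [DecidableEq κ] [Field K]
    (c : ι → κ) (d : κ → K) (hd : ∀ j, 1 + #{i | c i = j} * d j ≠ 0) :
    (partitionIndicator K c * diagonal d * (partitionIndicator K c)ᵀ + 1)⁻¹ =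
      1 - partitionIndicator K c * diagonal (fun j => d j / (1 + #{i | c i = j} * d j)) *
        (partitionIndicator K c)ᵀ := by
  apply inv_mul_mul_transpose_add_one
  rw [transpose_partitionIndicator_mul_self, diagonal_mul_diagonal, diagonal_mul_diagonal,
    diagonal_add]
  congr 1
  funext j
  rw [← mul_div_assoc, ← add_div, div_eq_iff (hd j)]
  ring

end Woodbury

end Matrix

lemma Finset.sum_sub_sq_eq_sum_sub_expect_sq_add [Field K] [CharZero K] (s : Finset ι)
    (f : ι → K) (a : K) :
    ∑ i ∈ s, (f i - a) ^ 2 =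
      ∑ i ∈ s, (f i - 𝔼 j ∈ s, f j) ^ 2 + #s * (𝔼 j ∈ s, f j - a) ^ 2 := by
  set m := 𝔼 j ∈ s, f j
  have hdev : ∑ i ∈ s, (f i - m) = 0 := by
    rw [sum_sub_distrib, sum_const, nsmul_eq_mul, card_mul_expect, sub_self]
  calc ∑ i ∈ s, (f i - a) ^ 2
      = ∑ i ∈ s, ((f i - m) ^ 2 + 2 * (m - a) * (f i - m) + (m - a) ^ 2) :=
        sum_congr rfl fun i _ => by ring
    _ = _ := by
        rw [sum_add_distrib, sum_add_distrib, ← mul_sum, hdev, sum_const, nsmul_eq_mul]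
        ring

section GroupMean

variable [Fintype ι] [Fintype κ] [DecidableEq κ] [Field K] [CharZero K] (c : ι → κ)

def groupMean (y : ι → K) (j : κ) : K := 𝔼 i with c i = j, y i

lemma sum_sub_comp_sq_eq_sum_sub_groupMean_sq_add (y : ι → K) (ζ : κ → K) :
    ∑ i, (y i - ζ (c i)) ^ 2 =
      ∑ i, (y i - groupMean c y (c i)) ^ 2 +
        ∑ j, #{i | c i = j} * (groupMean c y j - ζ j) ^ 2 := by
  rw [← sum_fiberwise univ c, ← sum_fiberwise univ c, ← sum_add_distrib]
  refine sum_congr rfl fun j _ => ?_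
  have hfiber : ∀ f : κ → K,
      ∑ i with c i = j, (y i - f (c i)) ^ 2 = ∑ i with c i = j, (y i - f j) ^ 2 :=
    fun f => sum_congr rfl fun i hi => by rw [(mem_filter.mp hi).2]
  rw [hfiber, hfiber]
  exact sum_sub_sq_eq_sum_sub_expect_sq_add _ _ _

lemma transpose_partitionIndicator_mulVec_sub (y : ι → K) (ζ : κ → K) (j : κ) :
    ((partitionIndicator K c)ᵀ *ᵥ (y - partitionIndicator K c *ᵥ ζ)) j =
      #{i | c i = j} * (groupMean c y j - ζ j) := by
  rw [transpose_partitionIndicator_mulVec, partitionIndicator_mulVec, mul_sub, groupMean,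
    card_mul_expect, ← nsmul_eq_mul, ← sum_const, ← sum_sub_distrib]
  exact sum_congr rfl fun i hi => by rw [Pi.sub_apply, (mem_filter.mp hi).2]

theorem dotProduct_inv_partitionIndicator_mulVec [DecidableEq ι] (y : ι → K) (ζ d : κ → K)
    (hd : ∀ j, 1 + #{i | c i = j} * d j ≠ 0) :
    (y - partitionIndicator K c *ᵥ ζ) ⬝ᵥ
        ((partitionIndicator K c * diagonal d * (partitionIndicator K c)ᵀ + 1)⁻¹ *ᵥ
          (y - partitionIndicator K c *ᵥ ζ)) =
      ∑ i, (y i - groupMean c y (c i)) ^ 2 +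
        ∑ j, #{i | c i = j} * (groupMean c y j - ζ j) ^ 2 / (1 + #{i | c i = j} * d j) := by
  set z := y - partitionIndicator K c *ᵥ ζ
  have hzz : z ⬝ᵥ z = ∑ i, (y i - ζ (c i)) ^ 2 := by
    simp only [z, partitionIndicator_mulVec, dotProduct, Pi.sub_apply, sq]
  have hw : (partitionIndicator K c)ᵀ *ᵥ z =
      fun j => #{i | c i = j} * (groupMean c y j - ζ j) :=
    funext (transpose_partitionIndicator_mulVec_sub c y ζ)
  rw [inv_partitionIndicator_mul_diagonal_mul_transpose_add_one c d hd,
    dotProduct_one_sub_mul_mul_transpose_mulVec, hzz, hw,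
    sum_sub_comp_sq_eq_sum_sub_groupMean_sq_add, add_sub_assoc, dotProduct, ← sum_sub_distrib]
  congr 1
  refine sum_congr rfl fun j _ => ?_
  rw [mulVec_diagonal, eq_div_iff (hd j)]
  linear_combination
    (-(#{i | c i = j} * (groupMean c y j - ζ j)) ^ 2) * div_mul_cancel₀ (d j) (hd j)

end GroupMean

theorem empirical_bayes_variance_rewrite_general
    (n J : ℕ) (c : Fin n → Fin J) (y : Fin n → ℝ) (ζ : Fin J → ℝ)
    (lam : Fin J → ℝ)
    (B : Matrix (Fin n) (Fin J) ℝ) (hB : ∀ i j, B i j = if c i = j then 1 else 0)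
    (N : Fin J → ℕ) (hN : ∀ j, N j = (Finset.univ.filter (fun i => c i = j)).card)
    (ybar : Fin J → ℝ)
    (hybar : ∀ j, ybar j = (∑ i ∈ Finset.univ.filter (fun i => c i = j), y i) / N j)
    (Λ : Matrix (Fin J) (Fin J) ℝ) (hΛ : Λ = Matrix.diagonal (fun j => lam j ^ 2))
    (z : Fin n → ℝ) (hz : z = y - B.mulVec ζ) :
    (n : ℝ)⁻¹ * (z ⬝ᵥ ((B * Λ * B.transpose + 1)⁻¹.mulVec z)) =
      (1 / n) * ∑ i, (y i - ybar (c i)) ^ 2 +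
        (1 / n) * ∑ j, (N j : ℝ) * (ybar j - ζ j) ^ 2 / (1 + N j * lam j ^ 2) := by
  obtain rfl : B = partitionIndicator ℝ c := ext hB
  obtain rfl : N = fun j => #{i | c i = j} := funext hN
  obtain rfl : ybar = groupMean c y :=
    funext fun j => (hybar j).trans (expect_eq_sum_div_card _ _).symm
  subst hΛ hz
  rw [dotProduct_inv_partitionIndicator_mulVec c y ζ _ fun j => by positivity]
  ring

/-- The empirical Bayes estimate
`σ̂² = n⁻¹(y − Bζ)ᵀ(BΛBᵀ + I)⁻¹(y − Bζ)` can be rewritten as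
`(1/n)Σ_i (y_i − f̄(x_i))² + (1/n)Σ_j n_j(ȳ_j − ζ_j)²/(1 + n_jλ_j²)`,
where `f̄(x_i) = ȳ_{j(i)}`. -/
theorem empirical_bayes_variance_rewrite
    (n J : ℕ) (hn : 0 < n) (c : Fin n → Fin J) (y : Fin n → ℝ) (ζ : Fin J → ℝ)
    (lam : Fin J → ℝ) (hlam : ∀ j, 0 < lam j)
    (B : Matrix (Fin n) (Fin J) ℝ) (hB : ∀ i j, B i j = if c i = j then 1 else 0)
    (N : Fin J → ℕ) (hN : ∀ j, N j = (Finset.univ.filter (fun i => c i = j)).card)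
    (hNpos : ∀ j, 1 ≤ N j)
    (ybar : Fin J → ℝ)
    (hybar : ∀ j, ybar j = (∑ i ∈ Finset.univ.filter (fun i => c i = j), y i) / N j)
    (Λ : Matrix (Fin J) (Fin J) ℝ) (hΛ : Λ = Matrix.diagonal (fun j => lam j ^ 2))
    (z : Fin n → ℝ) (hz : z = y - B.mulVec ζ) :
    (n : ℝ)⁻¹ * (z ⬝ᵥ ((B * Λ * B.transpose + 1)⁻¹.mulVec z)) =
      (1 / n) * ∑ i, (y i - ybar (c i)) ^ 2 +
        (1 / n) * ∑ j, (N j : ℝ) * (ybar j - ζ j) ^ 2 / (1 + N j * lam j ^ 2) :=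
  empirical_bayes_variance_rewrite_general n J c y ζ lam B hB N hN ybar hybar Λ hΛ z hz
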